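/- Let R be a commutative ring, S a multiplicative subset of R, and E an R-module. Then there exists s ∈ S such that s·Ext¹_R(N, E) = 0 for every finitely presented R-module N if and only if there exists s ∈ S satisfying: whenever P is a finitely generated projective R-module, K a finitely generated submodule of P with inclusion i : K → P, and f : K → E an R-homomorphism, there is an R-homomorphism g : P → E with s·f = g∘i. -/

import Mathlib

open CategoryTheory

universe u

/-- The `n`-th Ext group of two `A`-modules, as an `A`-module. -/
noncomputable def extMod (A : Type u) [CommRing A] (n : ℕ) (M N : ModuleCat.{u} A) :
    ModuleCat A :=
  ((Ext A (ModuleCat.{u} A) n).obj (Opposite.op M)).obj N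

namespace ExtFpAux
open CategoryTheory.Limits

noncomputable section
variable (R : Type u) [CommRing R]
variable (F : Type u) [AddCommGroup F] [Module R F] [Module.Projective R F]
variable (K : Submodule R F)

abbrev NN := ModuleCat.of R (F ⧸ K)
abbrev P0 := ModuleCat.of R F

instance : Projective (P0 R F) := by
  exact (IsProjective.iff_projective F).mp ‹_›

def pr : P0 R F ⟶ NN R F K := ModuleCat.ofHom K.mkQ

instance : Epi (pr R F K) := by
  rw [ModuleCat.epi_iff_surjective]
  exact (Submodule.mkQ_surjective K :)

open Projective in
lemma d_comp_self {X Y : ModuleCat.{u} R} (f : X ⟶ Y) : d f ≫ f = 0 :=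
  (Category.assoc _ _ _).trans
    ((congrArg (fun g => Projective.π (kernel f) ≫ g) (kernel.condition f)).trans comp_zero)

open Projective in
def myComplex : ChainComplex (ModuleCat.{u} R) ℕ :=
  ChainComplex.mk' (P0 R F) (syzygies (pr R F K)) (d (pr R F K))
    (fun f => ⟨_, d f, d_comp_self R f⟩)

open Projective HomologicalComplex CategoryTheory.ProjectiveResolution in
lemma myComplex_d_1_0 : (myComplex R F K).d 1 0 = d (pr R F K) := by
  simp [myComplex]

open Projective CategoryTheory.ProjectiveResolution in
lemma myComplex_exactAt_succ (n : ℕ) :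
    (myComplex R F K).ExactAt (n + 1) := by
  rw [HomologicalComplex.exactAt_iff' _ (n + 1 + 1) (n + 1) n (by simp) (by simp)]
  refine (ShortComplex.exact_iff_of_iso (ShortComplex.isoMk
    (S₁ := (myComplex R F K).sc' (n + 1 + 1) (n + 1) n)
    (S₂ := ShortComplex.mk (d ((myComplex R F K).d (n + 1) n)) ((myComplex R F K).d (n + 1) n)
      (d_comp_self R _))
    (ChainComplex.mk'XIso (P0 R F) (syzygies (pr R F K)) (d (pr R F K))
      (fun f => ⟨_, d f, d_comp_self R f⟩) n) (Iso.refl _) (Iso.refl _) ?_ ?_)).2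
    (exact_d_f ((myComplex R F K).d (n + 1) n))
  · exact ((Category.comp_id _).trans (ChainComplex.mk'_d (P0 R F) (syzygies (pr R F K))
      (d (pr R F K)) (fun f => ⟨_, d f, d_comp_self R f⟩) n)).symm
  · exact (Category.id_comp _).trans (Category.comp_id _).symm

instance (n : ℕ) : Projective ((myComplex R F K).X n) := by
  obtain (_ | _ | _ | n) := n
  · exact inferInstanceAs (Projective (P0 R F))
  all_goals apply Projective.projective_over

open Projective Category in
def myRes : ProjectiveResolution (NN R F K) where
  complex := myComplex R F K
  π := (ChainComplex.toSingle₀Equiv _ _).symm ⟨pr R F K, by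
          rw [myComplex_d_1_0]; exact d_comp_self R _⟩
  quasiIso := ⟨fun n => by
    cases n
    · rw [ChainComplex.quasiIsoAt₀_iff, ShortComplex.quasiIso_iff_of_zeros']
      · refine (ShortComplex.exact_and_epi_g_iff_of_iso ?_).2
          ⟨exact_d_f (pr R F K), by dsimp; infer_instance⟩
        exact ShortComplex.isoMk (Iso.refl _) (Iso.refl _) (Iso.refl _)
          (by exact (Category.id_comp _).trans (Category.comp_id _).symm)
          (by exact (Category.id_comp _).trans (Category.comp_id _).symm)
      all_goals rfl
    · rw [quasiIsoAt_iff_exactAt']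
      · apply myComplex_exactAt_succ
      · apply ChainComplex.exactAt_succ_single_obj⟩

lemma myRes_pi0 : (myRes R F K).π.f 0 = pr R F K := by
  simp [myRes, ChainComplex.toSingle₀Equiv]
  rfl

abbrev DD := (((myComplex R F K).d 1 0).hom : (myComplex R F K).X 1 →ₗ[R] F)

lemma range_DD : LinearMap.range (DD R F K) = K := by
  have h := (myRes R F K).exact₀.moduleCat_range_eq_ker
  dsimp at h
  exact h.trans ((congrArg (fun g => LinearMap.ker (ModuleCat.Hom.hom g)) (myRes_pi0 R F K)).trans
    (Submodule.ker_mkQ K))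

lemma exact_21 : LinearMap.range (((myComplex R F K).d 2 1).hom : _ →ₗ[R] _)
    = LinearMap.ker (DD R F K) := by
  have h := myComplex_exactAt_succ R F K 0
  rw [HomologicalComplex.exactAt_iff' _ 2 1 0 (by simp) (by simp)] at h
  exact h.moduleCat_range_eq_ker

variable (E : Type u) [AddCommGroup E] [Module R E]

abbrev YC := (myComplex R F K).linearYonedaObj R (ModuleCat.of R E)

abbrev SC := (YC R F K E).sc 1

abbrev SC' := (YC R F K E).sc' 0 1 2


def DD' : (myComplex R F K).X 1 →ₗ[R] K :=
  LinearMap.codRestrict K (DD R F K) (fun x => by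
    have : DD R F K x ∈ LinearMap.range (DD R F K) := LinearMap.mem_range_self _ x
    rwa [range_DD R F K] at this)

lemma DD'_surj : Function.Surjective (DD' R F K) := by
  rintro ⟨k, hk⟩
  rw [← range_DD R F K] at hk
  obtain ⟨y, hy⟩ := hk
  exact ⟨y, Subtype.ext hy⟩

lemma subtype_DD' : K.subtype ∘ₗ DD' R F K = DD R F K := rfl

def toLin1 (c : (SC' R F K E).X₂) : (myComplex R F K).X 1 →ₗ[R] E :=
  (show (myComplex R F K).X 1 ⟶ ModuleCat.of R E from c).hom

lemma toLin1_inj : Function.Injective (toLin1 R F K E) := fun _ _ h => ModuleCat.hom_ext h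

def ofLin1 (c : (myComplex R F K).X 1 →ₗ[R] E) : (SC' R F K E).X₂ :=
  (show (myComplex R F K).X 1 ⟶ ModuleCat.of R E from ModuleCat.ofHom c)

def ofLin0 (g : F →ₗ[R] E) : (SC' R F K E).X₁ :=
  (show P0 R F ⟶ ModuleCat.of R E from ModuleCat.ofHom g)

lemma mem_ker_iff (c : (myComplex R F K).X 1 →ₗ[R] E) :
    ofLin1 R F K E c ∈ LinearMap.ker (SC' R F K E).g.hom ↔
      c ∘ₗ (((myComplex R F K).d 2 1).hom : (myComplex R F K).X 2 →ₗ[R] (myComplex R F K).X 1) = 0 :=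
  ⟨fun h => congrArg ModuleCat.Hom.hom h, fun h => ModuleCat.hom_ext h⟩

lemma toCycles_eq (g : F →ₗ[R] E) :
    ((SC' R F K E).moduleCatToCycles (ofLin0 R F K E g) : (SC' R F K E).X₂)
      = ofLin1 R F K E (g ∘ₗ DD R F K) := rfl

def toLin0 (g : (SC' R F K E).X₁) : F →ₗ[R] E :=
  (show P0 R F ⟶ ModuleCat.of R E from g).hom

def coc (f : K →ₗ[R] E) : LinearMap.ker (SC' R F K E).g.hom :=
  ⟨ofLin1 R F K E (f ∘ₗ DD' R F K), by
    rw [mem_ker_iff]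
    apply LinearMap.ext
    intro z
    show f (DD' R F K ((myComplex R F K).d 2 1 z)) = 0
    have hz : DD' R F K ((myComplex R F K).d 2 1 z) = 0 := by
      apply Subtype.ext
      show DD R F K ((myComplex R F K).d 2 1 z) = 0
      exact congrArg (fun (g : (myComplex R F K).X 2 ⟶ P0 R F) => g z)
        ((myComplex R F K).d_comp_d 2 1 0)
    rw [hz, map_zero]⟩

lemma coc_smul (s : R) (f : K →ₗ[R] E) : coc R F K E (s • f) = s • coc R F K E f :=
  Subtype.ext rfl

lemma coc_surj (c : LinearMap.ker (SC' R F K E).g.hom) : ∃ f : K →ₗ[R] E, coc R F K E f = c := by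
  obtain ⟨c₀, hc₀⟩ := c
  set c' : (myComplex R F K).X 1 →ₗ[R] E := toLin1 R F K E c₀ with hc'
  have hmem : ofLin1 R F K E c' ∈ LinearMap.ker (SC' R F K E).g.hom := hc₀
  rw [mem_ker_iff] at hmem
  have hker : LinearMap.ker (DD' R F K) ≤ LinearMap.ker c' := by
    intro y hy
    have hy' : DD R F K y = 0 := congrArg (K.subtype) (hy : DD' R F K y = 0)
    have : y ∈ LinearMap.range (((myComplex R F K).d 2 1).hom :
        (myComplex R F K).X 2 →ₗ[R] (myComplex R F K).X 1) := by
      rw [exact_21 R F K]; exact hy'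
    obtain ⟨z, rfl⟩ := this
    exact congrArg (fun (g : (myComplex R F K).X 2 →ₗ[R] E) => g z) hmem
  let e := LinearMap.quotKerEquivOfSurjective _ (DD'_surj R F K)
  refine ⟨(Submodule.liftQ _ c' hker) ∘ₗ (e.symm : K →ₗ[R] _), Subtype.ext ?_⟩
  apply toLin1_inj R F K E
  apply LinearMap.ext
  intro y
  show Submodule.liftQ _ c' hker (e.symm (DD' R F K y)) = c' y
  have : e.symm (DD' R F K y) = Submodule.Quotient.mk y := by
    apply e.injective
    simp only [LinearEquiv.apply_symm_apply]
    rfl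
  rw [this]
  rfl

lemma coc_mem_iff (f : K →ₗ[R] E) :
    coc R F K E f ∈ LinearMap.range (SC' R F K E).moduleCatToCycles ↔
      ∃ g : F →ₗ[R] E, f = g ∘ₗ K.subtype := by
  constructor
  · rintro ⟨g₀, hg⟩
    set g : F →ₗ[R] E := toLin0 R F K E g₀ with hgdef
    refine ⟨g, ?_⟩
    have h1 : ofLin1 R F K E (g ∘ₗ DD R F K) = ofLin1 R F K E (f ∘ₗ DD' R F K) :=
      congrArg Subtype.val hg
    have h2 : g ∘ₗ DD R F K = f ∘ₗ DD' R F K := congrArg (toLin1 R F K E) h1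
    apply LinearMap.ext
    rintro ⟨k, hk⟩
    rw [← range_DD R F K] at hk
    obtain ⟨y, hy⟩ := hk
    have h3 := congrArg (fun (t : (myComplex R F K).X 1 →ₗ[R] E) => t y) h2
    have h5 : DD' R F K y = ⟨k, by rw [← range_DD R F K]; exact ⟨y, hy⟩⟩ := Subtype.ext hy
    simp only [LinearMap.comp_apply] at h3
    rw [h5] at h3
    exact h3.symm.trans (congrArg g hy)
  · rintro ⟨g, rfl⟩
    exact ⟨ofLin0 R F K E g, Subtype.ext rfl⟩


lemma smul_homology_iff (s : R) :
    (∀ x : (SC' R F K E).moduleCatLeftHomologyData.H, s • x = 0) ↔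
      (∀ f : K →ₗ[R] E, ∃ g : F →ₗ[R] E, s • f = g ∘ₗ K.subtype) := by
  have hmk : ∀ f : K →ₗ[R] E,
      (Submodule.Quotient.mk (coc R F K E (s • f)) :
        (LinearMap.ker (SC' R F K E).g.hom ⧸ LinearMap.range (SC' R F K E).moduleCatToCycles))
        = s • Submodule.Quotient.mk (coc R F K E f) := by
    intro f
    rw [coc_smul, Submodule.Quotient.mk_smul]
  constructor
  · intro h f
    have hx : (Submodule.Quotient.mk (coc R F K E (s • f)) :
        (LinearMap.ker (SC' R F K E).g.hom ⧸ LinearMap.range (SC' R F K E).moduleCatToCycles)) = 0 := by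
      rw [hmk f]
      exact h _
    rw [Submodule.Quotient.mk_eq_zero] at hx
    exact (coc_mem_iff R F K E (s • f)).1 hx
  · intro h x
    obtain ⟨c, rfl⟩ := Submodule.mkQ_surjective _ x
    obtain ⟨f, rfl⟩ := coc_surj R F K E c
    obtain ⟨g, hg⟩ := h f
    show s • (Submodule.Quotient.mk (coc R F K E f) : (LinearMap.ker (SC' R F K E).g.hom ⧸
        LinearMap.range (SC' R F K E).moduleCatToCycles)) = 0
    rw [← hmk f, Submodule.Quotient.mk_eq_zero]
    exact (coc_mem_iff R F K E (s • f)).2 ⟨g, hg⟩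

noncomputable def extMod' (n : ℕ) (M N : ModuleCat.{u} R) : ModuleCat R :=
  ((Ext R (ModuleCat.{u} R) n).obj (Opposite.op M)).obj N

def extIso : extMod' R 1 (NN R F K) (ModuleCat.of R E) ≅ (SC' R F K E).moduleCatLeftHomologyData.H :=
  (myRes R F K).isoExt 1 (ModuleCat.of R E) ≪≫
    (YC R F K E).homologyIsoSc' 0 1 2 (by simp) (by simp) ≪≫
    (SC' R F K E).moduleCatHomologyIso

lemma smul_iso_transfer {A B : ModuleCat.{u} R} (h : A ≅ B) (s : R)
    (hA : ∀ x : A, s • x = 0) : ∀ y : B, s • y = 0 := by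
  intro y
  have h1 : h.hom (h.inv y) = y :=
    congrArg (fun (φ : B ⟶ B) => φ y) h.inv_hom_id
  have h2 : s • y = (h.hom.hom : A →ₗ[R] B) (s • h.inv y) := by
    rw [map_smul, h1]
  rw [h2, hA (h.inv y), map_zero]

lemma key (s : R) :
    (∀ x : extMod' R 1 (NN R F K) (ModuleCat.of R E), s • x = 0) ↔
      (∀ f : K →ₗ[R] E, ∃ g : F →ₗ[R] E, s • f = g ∘ₗ K.subtype) := by
  rw [← smul_homology_iff R F K E s]
  constructor
  · exact smul_iso_transfer R (extIso R F K E) s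
  · exact smul_iso_transfer R (extIso R F K E).symm s

def extTransIso (M M' X : ModuleCat.{u} R) (i : M ≅ M') :
    extMod' R 1 M' X ≅ extMod' R 1 M X :=
  ((Ext R (ModuleCat.{u} R) 1).mapIso i.op).app X

theorem main
    (S : Submonoid R) :
    (∃ s ∈ S, ∀ (N : Type u) (_ : AddCommGroup N) (_ : Module R N),
        Module.FinitePresentation R N →
        ∀ x : extMod' R 1 (ModuleCat.of R N) (ModuleCat.of R E), s • x = 0) ↔
    (∃ s ∈ S, ∀ (P : Type u) (_ : AddCommGroup P) (_ : Module R P),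
        Module.Finite R P → Module.Projective R P →
        ∀ K : Submodule R P, K.FG →
        ∀ f : K →ₗ[R] E, ∃ g : P →ₗ[R] E, s • f = g ∘ₗ K.subtype) := by
  constructor
  · rintro ⟨s, hs, H⟩
    refine ⟨s, hs, ?_⟩
    intro P _ _ hfin hproj K hK f
    haveI : Module.Finite R P := hfin
    haveI : Module.Projective R P := hproj
    haveI hfp : Module.FinitePresentation R P :=
      Module.finitePresentation_of_projective R P
    haveI hfpq : Module.FinitePresentation R (P ⧸ K) := by
      apply Module.finitePresentation_of_surjective K.mkQ (Submodule.mkQ_surjective K)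
      rwa [Submodule.ker_mkQ]
    exact (key R P K E s).1 (H (P ⧸ K) _ _ hfpq) f
  · rintro ⟨s, hs, H⟩
    refine ⟨s, hs, ?_⟩
    intro N _ _ hN x
    haveI : Module.FinitePresentation R N := hN
    obtain ⟨L, _, _, K, e, hfree, hfin, hKfg⟩ :=
      Module.FinitePresentation.equiv_quotient R N
    haveI : Module.Free R L := hfree
    haveI : Module.Finite R L := hfin
    haveI : Module.Projective R L := Module.Projective.of_free
    have hlift : ∀ f : K →ₗ[R] E, ∃ g : L →ₗ[R] E, s • f = g ∘ₗ K.subtype :=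
      H L _ _ hfin (Module.Projective.of_free) K hKfg
    have hext : ∀ y : extMod' R 1 (NN R L K) (ModuleCat.of R E), s • y = 0 :=
      (key R L K E s).2 hlift
    exact smul_iso_transfer R
      (extTransIso R (ModuleCat.of R N) (NN R L K) (ModuleCat.of R E) (e.toModuleIso)) s
      hext x


end
end ExtFpAux

/-- There exists `s ∈ S` with `s • Ext¹_R(N, E) = 0` for every finitely presented
`R`-module `N` if and only if there exists `s ∈ S` such that whenever `P` is a finitely
generated projective `R`-module, `K` a finitely generated submodule of `P` with
inclusion `i : K → P`, and `f : K → E` an `R`-homomorphism, there is `g : P → E` with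
`s • f = g ∘ i`. -/
theorem ext_fp_iff_projective_lifting
    (R : Type u) [CommRing R] (S : Submonoid R)
    (E : Type u) [AddCommGroup E] [Module R E] :
    (∃ s ∈ S, ∀ (N : Type u) (_ : AddCommGroup N) (_ : Module R N),
        Module.FinitePresentation R N →
        ∀ x : extMod R 1 (ModuleCat.of R N) (ModuleCat.of R E), s • x = 0) ↔
    (∃ s ∈ S, ∀ (P : Type u) (_ : AddCommGroup P) (_ : Module R P),
        Module.Finite R P → Module.Projective R P →
        ∀ K : Submodule R P, K.FG →
        ∀ f : K →ₗ[R] E, ∃ g : P →ₗ[R] E, s • f = g ∘ₗ K.subtype) :=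
  ExtFpAux.main R E S
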